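/- arXiv:1403.3738 — 5 statements merged into one kernel-verified Lean document; each statement's English description precedes it below -/
import Mathlib

section
/- Let f : ℝⁿ → ℝ be a smooth convex function, let Ω₀ = {θ : f(θ) ≤ 0}, and define the projection operator Proj(θ, y) = y - (∇f/‖∇f‖)⟨∇f/‖∇f‖, y⟩ f(θ) when f(θ) > 0 and ∇f(θ)ᵀy > 0, and Proj(θ, y) = y otherwise. Then for any θ* ∈ Ω₀ and any θ, y ∈ ℝⁿ, (θ - θ*)ᵀ(Proj(θ, y) - y) ≤ 0. -/
/-!
On the active branch, `Proj(θ, y) - y` is a nonnegative multiple of `-∇f(θ)`, while convexity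
gives `⟪∇f(θ), θ - θ*⟫ ≥ f(θ) - f(θ*) ≥ 0`; elsewhere `Proj(θ, y) - y = 0`.
-/

open scoped RealInnerProductSpace Classical

/-- Projection operator associated to a convex function `f` with gradient `g`. -/
noncomputable def projOp {n : ℕ} (f : EuclideanSpace ℝ (Fin n) → ℝ)
    (g : EuclideanSpace ℝ (Fin n) → EuclideanSpace ℝ (Fin n))
    (θ y : EuclideanSpace ℝ (Fin n)) : EuclideanSpace ℝ (Fin n) :=
  if 0 < f θ ∧ 0 < ⟪g θ, y⟫ then
    y - (f θ * (⟪g θ, y⟫ / ‖g θ‖ ^ 2)) • g θ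
  else y

theorem ConvexOn.le_sub_of_hasFDerivAt {E : Type*} [NormedAddCommGroup E] [NormedSpace ℝ E]
    {s : Set E} {f : E → ℝ} {f' : E →L[ℝ] ℝ} {x y : E} (hf : ConvexOn ℝ s f)
    (hx : x ∈ s) (hy : y ∈ s) (hfx : HasFDerivAt f f' x) :
    f' (y - x) ≤ f y - f x := by
  set L : ℝ →ᵃ[ℝ] E := AffineMap.lineMap x y
  have hL0 : L 0 = x := AffineMap.lineMap_apply_zero x y
  have hL1 : L 1 = y := AffineMap.lineMap_apply_one x y
  have hderiv : HasDerivAt (f ∘ L) (f' (y - x)) 0 :=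
    (hL0 ▸ hfx).comp_hasDerivAt 0 AffineMap.hasDerivAt_lineMap
  have hslope := (hf.comp_affineMap L).le_slope_of_hasDerivAt
    (by simpa [hL0]) (by simpa [hL1]) one_pos hderiv
  simpa [slope, hL0, hL1] using hslope

theorem ConvexOn.inner_sub_nonneg_of_hasGradientAt {F : Type*} [NormedAddCommGroup F]
    [InnerProductSpace ℝ F] [CompleteSpace F] {s : Set F} {f : F → ℝ} {g x y : F}
    (hf : ConvexOn ℝ s f) (hx : x ∈ s) (hy : y ∈ s) (hfx : HasGradientAt f g x)
    (hfy : f y ≤ f x) : 0 ≤ ⟪g, x - y⟫ := by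
  have h := hf.le_sub_of_hasFDerivAt hx hy hfx.hasFDerivAt
  rw [InnerProductSpace.toDual_apply_apply, ← neg_sub x y, inner_neg_right] at h
  linarith

theorem projection_operator_property_general {n : ℕ}
    (f : EuclideanSpace ℝ (Fin n) → ℝ)
    (g : EuclideanSpace ℝ (Fin n) → EuclideanSpace ℝ (Fin n))
    (hconv : ConvexOn ℝ Set.univ f)
    (hgrad : ∀ θ, HasGradientAt f (g θ) θ)
    (θ θs y : EuclideanSpace ℝ (Fin n))
    (hθs : f θs ≤ 0) :
    ⟪θ - θs, projOp f g θ y - y⟫ ≤ 0 := by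
  unfold projOp
  split_ifs with hactive
  · obtain ⟨hfθ, hgy⟩ := hactive
    have hcoef : 0 ≤ f θ * (⟪g θ, y⟫ / ‖g θ‖ ^ 2) := by positivity
    have hdir : 0 ≤ ⟪θ - θs, g θ⟫ := real_inner_comm (g θ) (θ - θs) ▸
      hconv.inner_sub_nonneg_of_hasGradientAt
        (Set.mem_univ θ) (Set.mem_univ θs) (hgrad θ) (by linarith)
    rw [sub_sub_cancel_left, inner_neg_right, inner_smul_right, neg_nonpos]
    exact mul_nonneg hcoef hdir
  · simp

theorem projection_operator_property {n : ℕ}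
    (f : EuclideanSpace ℝ (Fin n) → ℝ)
    (g : EuclideanSpace ℝ (Fin n) → EuclideanSpace ℝ (Fin n))
    (hconv : ConvexOn ℝ Set.univ f)
    (hgrad : ∀ θ, HasGradientAt f (g θ) θ)
    (θ θs y : EuclideanSpace ℝ (Fin n))
    (hθs : f θs ≤ 0)
    (hg_ne : 0 < f θ → g θ ≠ 0) :
    ⟪θ - θs, projOp f g θ y - y⟫ ≤ 0 :=
  projection_operator_property_general f g hconv hgrad θ θs y hθs
end

section
/- Let f : ℝⁿ → ℝ be smooth and convex, θ : [0,∞) → ℝⁿ solve the ODE θ̇(t) = Proj(θ(t), y(t)) with f(θ(0)) ≤ 1. Then f(θ(t)) ≤ 1 for all t ≥ 0, i.e., the trajectory remains in the set Ω₁ = {θ | f(θ) ≤ 1}. -/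
open scoped RealInnerProductSpace Classical

/-!
Along a trajectory, `d/dt f(θ) = ⟪∇f(θ), Proj(θ, y)⟫`, which equals `⟪∇f(θ), y⟫ (1 - f(θ))` on the
projection branch and `⟪∇f(θ), y⟫ ≤ 0` off it whenever `f(θ) > 0`. Hence `f ∘ θ` cannot increase
while it is above `1`, and a barrier argument shows that it never exceeds `1`.
-/

open Set

theorem image_le_of_deriv_right_nonpos_of_lt {φ φ' : ℝ → ℝ} {a b c : ℝ}
    (hφ : ContinuousOn φ (Icc a b)) (hφ' : ∀ x ∈ Ico a b, HasDerivWithinAt φ (φ' x) (Ici x) x)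
    (ha : φ a ≤ c) (bound : ∀ x ∈ Ico a b, c < φ x → φ' x ≤ 0) :
    ∀ ⦃x⦄, x ∈ Icc a b → φ x ≤ c := by
  intro x hx
  -- the barrier `c + ε (1 + s - a)` grows strictly, while `φ` cannot grow once above `c`
  have barrier : ∀ ε > 0, φ x ≤ c + ε * (1 + x - a) := by
    intro ε hε
    have hB : ∀ s, HasDerivAt (fun s => c + ε * (1 + s - a)) ε s := fun s => by
      simpa using ((hasDerivAt_id s).const_add 1 |>.sub_const a |>.const_mul ε |>.const_add c)
    refine image_le_of_deriv_right_lt_deriv_boundary hφ hφ' (by linarith) hB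
      (fun s hs hs_eq => ?_) hx
    have : c < φ s := by rw [hs_eq]; nlinarith [hs.1]
    linarith [bound s hs this]
  refine le_of_forall_pos_le_add fun δ hδ => ?_
  have hlen : 0 < 1 + x - a := by linarith [hx.1]
  calc φ x ≤ c + δ / (1 + x - a) * (1 + x - a) := barrier _ (by positivity)
    _ = c + δ := by field_simp

theorem HasGradientAt.comp_hasDerivAt {F : Type*} [NormedAddCommGroup F] [InnerProductSpace ℝ F]
    [CompleteSpace F] {f : F → ℝ} {f' : F} {θ : ℝ → F} {θ' : F} {t : ℝ}
    (hf : HasGradientAt f f' (θ t)) (hθ : HasDerivAt θ θ' t) :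
    HasDerivAt (f ∘ θ) ⟪f', θ'⟫ t := by
  simpa [InnerProductSpace.toDual_apply_apply] using
    (hasGradientAt_iff_hasFDerivAt.mp hf).comp_hasDerivAt t hθ

section projOp

variable {n : ℕ} {f : EuclideanSpace ℝ (Fin n) → ℝ}
  {g : EuclideanSpace ℝ (Fin n) → EuclideanSpace ℝ (Fin n)} {θ y : EuclideanSpace ℝ (Fin n)}

theorem inner_projOp_of_pos (h : 0 < f θ ∧ 0 < ⟪g θ, y⟫) :
    ⟪g θ, projOp f g θ y⟫ = ⟪g θ, y⟫ * (1 - f θ) := by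
  have hg : g θ ≠ 0 := by
    rintro hg
    simp [hg] at h
  have hnorm : ‖g θ‖ ^ 2 ≠ 0 := by positivity
  simp only [projOp, if_pos h, inner_sub_right, real_inner_smul_right, real_inner_self_eq_norm_sq]
  field_simp

theorem inner_projOp_nonpos_of_one_le (hf : 1 ≤ f θ) : ⟪g θ, projOp f g θ y⟫ ≤ 0 := by
  by_cases h : 0 < f θ ∧ 0 < ⟪g θ, y⟫
  · rw [inner_projOp_of_pos h]
    exact mul_nonpos_of_nonneg_of_nonpos h.2.le (by linarith)
  · rw [projOp, if_neg h]
    exact not_lt.mp fun hy => h ⟨by linarith, hy⟩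

end projOp

theorem projection_keeps_trajectory_in_sublevel_set_general {n : ℕ}
    (f : EuclideanSpace ℝ (Fin n) → ℝ)
    (g : EuclideanSpace ℝ (Fin n) → EuclideanSpace ℝ (Fin n))
    (hgrad : ∀ θ, HasGradientAt f (g θ) θ)
    (θ y : ℝ → EuclideanSpace ℝ (Fin n))
    (hODE : ∀ t, 0 ≤ t → HasDerivAt θ (projOp f g (θ t) (y t)) t)
    (h0 : f (θ 0) ≤ 1) :
    ∀ t, 0 ≤ t → f (θ t) ≤ 1 := by
  intro t ht
  have hderiv : ∀ s, 0 ≤ s → HasDerivAt (f ∘ θ) ⟪g (θ s), projOp f g (θ s) (y s)⟫ s :=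
    fun s hs => (hgrad (θ s)).comp_hasDerivAt (hODE s hs)
  exact image_le_of_deriv_right_nonpos_of_lt (b := t)
    (fun s hs => (hderiv s hs.1).continuousAt.continuousWithinAt)
    (fun s hs => (hderiv s hs.1).hasDerivWithinAt) h0
    (fun s _ hs => inner_projOp_nonpos_of_one_le hs.le) ⟨ht, le_rfl⟩

theorem projection_keeps_trajectory_in_sublevel_set {n : ℕ}
    (f : EuclideanSpace ℝ (Fin n) → ℝ)
    (g : EuclideanSpace ℝ (Fin n) → EuclideanSpace ℝ (Fin n))
    (hconv : ConvexOn ℝ Set.univ f)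
    (hgrad : ∀ θ, HasGradientAt f (g θ) θ)
    (hg_cont : Continuous g) (hf_cont : Continuous f)
    (θ y : ℝ → EuclideanSpace ℝ (Fin n))
    (hy_cont : Continuous y)
    (hODE : ∀ t, 0 ≤ t → HasDerivAt θ (projOp f g (θ t) (y t)) t)
    (h0 : f (θ 0) ≤ 1) :
    ∀ t, 0 ≤ t → f (θ t) ≤ 1 :=
  projection_keeps_trajectory_in_sublevel_set_general f g hgrad θ y hODE h0
end

section
/- Let Γ ∈ ℝ^{n×n} be symmetric positive definite, f : ℝⁿ → ℝ smooth and convex, and define the Γ-projection Proj_Γ(θ, y) = Γy - Γ(∇f∇fᵀ)/(∇fᵀΓ∇f) Γy f(θ) when f(θ) > 0 and ∇fᵀΓy > 0, else Proj_Γ(θ, y) = Γy. Then for any θ* with f(θ*) ≤ 0, (θ - θ*)ᵀ(Γ⁻¹ Proj_Γ(θ, y) - y) ≤ 0. -/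
/-!
Undoing `Γ` gives `Γ⁻¹ Proj_Γ(θ, y) - y = -c ∇f(θ)` with `c ≥ 0`, and `c ≠ 0` only if `f(θ) > 0`.
In that case the supporting hyperplane of the convex `f` at `θ` gives
`∇f(θ)ᵀ(θ* - θ) ≤ f(θ*) - f(θ) < 0`, so `(θ - θ*)ᵀ(-c ∇f(θ)) ≤ 0`.
-/

open scoped Classical
open Matrix

/-- The Γ-projection operator associated to a convex function `f` with gradient `g`. -/
noncomputable def projGamma {n : ℕ} (Γ : Matrix (Fin n) (Fin n) ℝ)
    (f : (Fin n → ℝ) → ℝ) (g : (Fin n → ℝ) → (Fin n → ℝ))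
    (θ y : Fin n → ℝ) : Fin n → ℝ :=
  if 0 < f θ ∧ 0 < g θ ⬝ᵥ Γ.mulVec y then
    Γ.mulVec y - (f θ * (g θ ⬝ᵥ Γ.mulVec y) / (g θ ⬝ᵥ Γ.mulVec (g θ))) • Γ.mulVec (g θ)
  else Γ.mulVec y

theorem ConvexOn.apply_sub_le_of_hasFDerivAt {E : Type*} [NormedAddCommGroup E] [NormedSpace ℝ E]
    {s : Set E} {f : E → ℝ} {f' : E →L[ℝ] ℝ} {x y : E} (hf : ConvexOn ℝ s f) (hx : x ∈ s)
    (hy : y ∈ s) (hf' : HasFDerivAt f f' x) : f' (y - x) ≤ f y - f x := by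
  set ℓ : ℝ →ᵃ[ℝ] E := AffineMap.lineMap x y
  have hline : ConvexOn ℝ (ℓ ⁻¹' s) (f ∘ ℓ) := hf.comp_affineMap ℓ
  have hderiv : HasDerivAt (f ∘ ℓ) (f' (y - x)) 0 := by
    have hf'0 : HasFDerivAt f f' (ℓ 0) := by simpa [ℓ] using hf'
    exact hf'0.comp_hasDerivAt 0 AffineMap.hasDerivAt_lineMap
  simpa [slope_def_field, ℓ] using
    hline.le_slope_of_hasDerivAt (by simpa [ℓ] using hx) (by simpa [ℓ] using hy) one_pos hderiv

theorem ConvexOn.inner_sub_le_of_hasGradientAt {E : Type*} [NormedAddCommGroup E]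
    [InnerProductSpace ℝ E] [CompleteSpace E] {s : Set E} {f : E → ℝ} {f' x y : E}
    (hf : ConvexOn ℝ s f) (hx : x ∈ s) (hy : y ∈ s) (hf' : HasGradientAt f f' x) :
    inner ℝ f' (y - x) ≤ f y - f x := by
  simpa using hf.apply_sub_le_of_hasFDerivAt hx hy hf'.hasFDerivAt

theorem ConvexOn.dotProduct_sub_le_of_hasGradientAt {ι : Type*} [Fintype ι]
    {f : (ι → ℝ) → ℝ} {g x y : ι → ℝ} (hf : ConvexOn ℝ Set.univ f)
    (hg : HasGradientAt (fun v : EuclideanSpace ℝ ι => f v) ((EuclideanSpace.equiv ι ℝ).symm g)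
      ((EuclideanSpace.equiv ι ℝ).symm x)) :
    g ⬝ᵥ (y - x) ≤ f y - f x := by
  have hf' : ConvexOn ℝ Set.univ (fun v : EuclideanSpace ℝ ι => f v) :=
    hf.comp_linearMap (EuclideanSpace.equiv ι ℝ).toLinearMap
  simpa [EuclideanSpace.inner_eq_star_dotProduct, dotProduct_comm] using
    hf'.inner_sub_le_of_hasGradientAt (Set.mem_univ _)
      (Set.mem_univ ((EuclideanSpace.equiv ι ℝ).symm y)) hg

section projGamma

variable {n : ℕ} (Γ : Matrix (Fin n) (Fin n) ℝ) (f : (Fin n → ℝ) → ℝ)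
  (g : (Fin n → ℝ) → (Fin n → ℝ)) (θ y : Fin n → ℝ)

noncomputable def projGammaCoeff : ℝ :=
  if 0 < f θ ∧ 0 < g θ ⬝ᵥ Γ *ᵥ y then f θ * (g θ ⬝ᵥ Γ *ᵥ y) / (g θ ⬝ᵥ Γ *ᵥ g θ) else 0

theorem projGamma_eq_sub_smul :
    projGamma Γ f g θ y = Γ *ᵥ y - projGammaCoeff Γ f g θ y • Γ *ᵥ g θ := by
  unfold projGamma projGammaCoeff
  split_ifs <;> simp

variable {Γ f g θ y}

theorem projGammaCoeff_eq_zero_of_nonpos (hf : f θ ≤ 0) : projGammaCoeff Γ f g θ y = 0 :=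
  if_neg fun h => hf.not_gt h.1

/-- If `g θ = 0` the denominator vanishes and the coefficient is `0` by the convention `x / 0 = 0`. -/
theorem projGammaCoeff_nonneg (hΓ : Γ.PosSemidef) : 0 ≤ projGammaCoeff Γ f g θ y := by
  unfold projGammaCoeff
  split_ifs with h
  · have hgΓg : 0 ≤ g θ ⬝ᵥ Γ *ᵥ g θ := by simpa using hΓ.dotProduct_mulVec_nonneg (g θ)
    exact div_nonneg (mul_pos h.1 h.2).le hgΓg
  · exact le_rfl

theorem inv_mulVec_projGamma_sub (hΓ : IsUnit Γ) :
    Γ⁻¹ *ᵥ projGamma Γ f g θ y - y = -(projGammaCoeff Γ f g θ y • g θ) := by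
  rw [projGamma_eq_sub_smul, mulVec_sub, mulVec_smul, mulVec_mulVec, mulVec_mulVec,
    nonsing_inv_mul _ ((isUnit_iff_isUnit_det Γ).mp hΓ), one_mulVec, one_mulVec]
  abel

end projGamma

theorem gamma_projection_property_general {n : ℕ}
    (Γ : Matrix (Fin n) (Fin n) ℝ) (hΓpos : Γ.PosDef)
    (f : (Fin n → ℝ) → ℝ) (g : (Fin n → ℝ) → (Fin n → ℝ))
    (hconv : ConvexOn ℝ Set.univ f)
    (hgrad : ∀ θ, HasGradientAt (fun v : EuclideanSpace ℝ (Fin n) => f v)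
      ((EuclideanSpace.equiv (Fin n) ℝ).symm (g θ))
      ((EuclideanSpace.equiv (Fin n) ℝ).symm θ))
    (θ θs y : Fin n → ℝ)
    (hθs : f θs ≤ 0) :
    (θ - θs) ⬝ᵥ (Γ⁻¹.mulVec (projGamma Γ f g θ y) - y) ≤ 0 := by
  rw [inv_mulVec_projGamma_sub hΓpos.isUnit, dotProduct_neg, dotProduct_smul, smul_eq_mul,
    neg_nonpos]
  rcases le_or_gt (f θ) 0 with hf | hf
  · rw [projGammaCoeff_eq_zero_of_nonpos hf, zero_mul]
  · have hsupport : g θ ⬝ᵥ (θs - θ) ≤ f θs - f θ :=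
      hconv.dotProduct_sub_le_of_hasGradientAt (hgrad θ)
    have hdescent : 0 ≤ (θ - θs) ⬝ᵥ g θ := by
      rw [← neg_sub θs θ, neg_dotProduct, dotProduct_comm]
      linarith
    exact mul_nonneg (projGammaCoeff_nonneg hΓpos.posSemidef) hdescent

theorem gamma_projection_property {n : ℕ}
    (Γ : Matrix (Fin n) (Fin n) ℝ) (hΓsymm : Γ.IsSymm) (hΓpos : Γ.PosDef)
    (f : (Fin n → ℝ) → ℝ) (g : (Fin n → ℝ) → (Fin n → ℝ))
    (hconv : ConvexOn ℝ Set.univ f)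
    (hgrad : ∀ θ, HasGradientAt (fun v : EuclideanSpace ℝ (Fin n) => f v)
      ((EuclideanSpace.equiv (Fin n) ℝ).symm (g θ))
      ((EuclideanSpace.equiv (Fin n) ℝ).symm θ))
    (θ θs y : Fin n → ℝ)
    (hθs : f θs ≤ 0)
    (hg_ne : 0 < f θ → g θ ≠ 0) :
    (θ - θs) ⬝ᵥ (Γ⁻¹.mulVec (projGamma Γ f g θ y) - y) ≤ 0 :=
  gamma_projection_property_general Γ hΓpos f g hconv hgrad θ θs y hθs
end

section
/- For the error dynamics ė = A_m(α(t)) e + B K̃ᵀ(t) x with Lyapunov function V(e, K̃) = eᵀ P e + trace(K̃ᵀ Γ⁻¹ K̃), where P A_m(α) + A_m(α)ᵀ P ≤ -Q for all α, and the adaptive law K̇̂ = Proj_Γ(K̂, -x eᵀ P B) with K̃ = K̂ - K*, the derivative of V along trajectories satisfies V̇ ≤ -eᵀ Q e - 2 trace(K̃ᵀ Γ⁻¹ K̇*). -/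
/-!
Both parts of `V` are quadratic forms of symmetric bilinear maps, so `V̇ = 2 eᵀ P ė + 2 tr(K̃ᵀ Γ⁻¹ K̃̇)`.
Substituting `ė = A e + B K̃ᵀ x`, the Lyapunov inequality bounds `2 eᵀ P A e` by `-eᵀ Q e`, and the
cross term `2 eᵀ P B K̃ᵀ x = 2 tr(K̃ᵀ x (eᵀ P B))` is absorbed, together with the `K̇̂` part of
`K̃̇ = K̇̂ - K̇*`, by the projection inequality; only `-2 tr(K̃ᵀ Γ⁻¹ K̇*)` survives.
-/

open Matrix

attribute [local instance] Matrix.normedAddCommGroup Matrix.normedSpace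

theorem HasDerivAt.isBilinearMap_diag {E : Type*} [NormedAddCommGroup E] [NormedSpace ℝ E]
    [FiniteDimensional ℝ E] {f : E → E → ℝ} (hf : IsBilinearMap ℝ f)
    (hf_comm : ∀ u v, f u v = f v u) {u : ℝ → E} {u' : E} {t : ℝ} (hu : HasDerivAt u u' t) :
    HasDerivAt (fun s ↦ f (u s) (u s)) (2 * f (u t) u') t :=
  (hf.toContinuousBilinearMap.hasDerivAt_of_bilinear (fun _ ↦ hu) (fun _ ↦ hu)).congr_deriv <| by
    simp only [IsBilinearMap.toContinuousBilinearMap_apply, hf_comm u']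
    ring

namespace Matrix

section CommSemiring

variable {R l n : Type*} [CommSemiring R] [Fintype n] [Fintype l]

theorem isBilinearMap_dotProduct_mulVec (M : Matrix n n R) :
    IsBilinearMap R (fun u v : n → R ↦ u ⬝ᵥ M *ᵥ v) where
  add_left _ _ _ := add_dotProduct _ _ _
  smul_left _ _ _ := smul_dotProduct _ _ _
  add_right _ _ _ := by simp only [mulVec_add, dotProduct_add]
  smul_right _ _ _ := by simp only [mulVec_smul, dotProduct_smul]

theorem isBilinearMap_trace_transpose_mul_mul (G : Matrix n n R) :
    IsBilinearMap R (fun X Y : Matrix n l R ↦ trace (Xᵀ * (G * Y))) where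
  add_left _ _ _ := by simp only [transpose_add, Matrix.add_mul, trace_add]
  smul_left _ _ _ := by simp only [transpose_smul, Matrix.smul_mul, trace_smul]
  add_right _ _ _ := by simp only [Matrix.mul_add, trace_add]
  smul_right _ _ _ := by simp only [Matrix.mul_smul, trace_smul]

theorem IsSymm.dotProduct_mulVec_comm {M : Matrix n n R} (hM : M.IsSymm) (u v : n → R) :
    u ⬝ᵥ M *ᵥ v = v ⬝ᵥ M *ᵥ u := by
  rw [dotProduct_mulVec, ← mulVec_transpose, hM.eq, dotProduct_comm]

theorem IsSymm.trace_transpose_mul_mul_comm {G : Matrix n n R} (hG : G.IsSymm)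
    (X Y : Matrix n l R) : trace (Xᵀ * (G * Y)) = trace (Yᵀ * (G * X)) := by
  rw [← trace_transpose, transpose_mul, transpose_mul, transpose_transpose, hG.eq,
    Matrix.mul_assoc]

theorem trace_mul_vecMulVec (M : Matrix l n R) (x : n → R) (w : l → R) :
    trace (M * vecMulVec x w) = w ⬝ᵥ M *ᵥ x := by
  rw [mul_vecMulVec, trace_vecMulVec, dotProduct_comm]

end CommSemiring

variable {n : Type*} [Fintype n]

theorem IsSymm.two_mul_dotProduct_mulVec_mulVec_le {P Q A : Matrix n n ℝ} (hP : P.IsSymm)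
    (hLyap : (-Q - (P * A + Aᵀ * P)).PosSemidef) (e : n → ℝ) :
    2 * (e ⬝ᵥ P *ᵥ (A *ᵥ e)) ≤ -(e ⬝ᵥ Q *ᵥ e) := by
  have hnonneg : 0 ≤ e ⬝ᵥ (-Q - (P * A + Aᵀ * P)) *ᵥ e := by
    simpa using hLyap.dotProduct_mulVec_nonneg e
  have hsymm : e ⬝ᵥ Aᵀ *ᵥ (P *ᵥ e) = e ⬝ᵥ P *ᵥ (A *ᵥ e) := by
    rw [mulVec_transpose, dotProduct_comm, ← dotProduct_mulVec, dotProduct_comm,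
      hP.dotProduct_mulVec_comm]
  simp only [sub_mulVec, add_mulVec, neg_mulVec, dotProduct_sub, dotProduct_add,
    dotProduct_neg, ← mulVec_mulVec, hsymm] at hnonneg
  linarith

end Matrix

section

variable {l n : Type*} [Fintype n] [Fintype l] {t : ℝ}

theorem HasDerivAt.dotProduct_mulVec_self {M : Matrix n n ℝ} (hM : M.IsSymm) {u : ℝ → n → ℝ}
    {u' : n → ℝ} (hu : HasDerivAt u u' t) :
    HasDerivAt (fun s ↦ u s ⬝ᵥ M *ᵥ u s) (2 * (u t ⬝ᵥ M *ᵥ u')) t :=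
  hu.isBilinearMap_diag (isBilinearMap_dotProduct_mulVec M) hM.dotProduct_mulVec_comm

theorem HasDerivAt.trace_transpose_mul_mul_self {G : Matrix n n ℝ} (hG : G.IsSymm)
    {K : ℝ → Matrix n l ℝ} {K' : Matrix n l ℝ} (hK : HasDerivAt K K' t) :
    HasDerivAt (fun s ↦ trace ((K s)ᵀ * (G * K s))) (2 * trace ((K t)ᵀ * (G * K'))) t :=
  hK.isBilinearMap_diag (isBilinearMap_trace_transpose_mul_mul G) hG.trace_transpose_mul_mul_comm

end

theorem adaptive_lyapunov_derivative_bound_general {N m : ℕ}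
    (P Q : Matrix (Fin N) (Fin N) ℝ) (hP : P.PosDef)
    (Γ : Matrix (Fin N) (Fin N) ℝ) (hΓsymm : Γ.IsSymm)
    (A : ℝ → Matrix (Fin N) (Fin N) ℝ)
    (hLyap : ∀ t, (-Q - (P * A t + (A t)ᵀ * P)).PosSemidef)
    (B : Matrix (Fin N) (Fin m) ℝ)
    (e x : ℝ → Fin N → ℝ)
    (Khat Ks Ks' Pr : ℝ → Matrix (Fin N) (Fin m) ℝ)
    -- error dynamics ė = A_m e + B K̃ᵀ x
    (he : ∀ t, HasDerivAt e
      ((A t).mulVec (e t) + B.mulVec ((Khat t - Ks t)ᵀ.mulVec (x t))) t)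
    -- adaptive law: K̇̂ = Proj_Γ(K̂, Y) with Y = -x eᵀ P B
    (hKhat : ∀ t, HasDerivAt Khat (Pr t) t)
    (hKs : ∀ t, HasDerivAt Ks (Ks' t) t)
    (hProj : ∀ t,
      Matrix.trace ((Khat t - Ks t)ᵀ *
        (Γ⁻¹ * Pr t - (-vecMulVec (x t) (vecMul (vecMul (e t) P) B)))) ≤ 0) :
    ∀ t, ∃ d,
      HasDerivAt (fun s => e s ⬝ᵥ P.mulVec (e s) +
        Matrix.trace ((Khat s - Ks s)ᵀ * (Γ⁻¹ * (Khat s - Ks s)))) d t ∧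
      d ≤ -(e t ⬝ᵥ Q.mulVec (e t)) -
        2 * Matrix.trace ((Khat t - Ks t)ᵀ * (Γ⁻¹ * Ks' t)) := by
  intro t
  have hPsymm : P.IsSymm := isHermitian_iff_isSymm.mp hP.isHermitian
  refine ⟨_, ((he t).dotProduct_mulVec_self hPsymm).add
    (((hKhat t).sub (hKs t)).trace_transpose_mul_mul_self hΓsymm.inv), ?_⟩
  have hstable := hPsymm.two_mul_dotProduct_mulVec_mulVec_le (hLyap t) (e t)
  have hproj := hProj t
  rw [sub_neg_eq_add, Matrix.mul_add, trace_add, trace_mul_vecMulVec, ← dotProduct_mulVec,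
    ← dotProduct_mulVec] at hproj
  simp only [Pi.sub_apply, mulVec_add, dotProduct_add, Matrix.mul_sub, trace_sub]
  linarith

theorem adaptive_lyapunov_derivative_bound {N m : ℕ}
    (P Q : Matrix (Fin N) (Fin N) ℝ) (hP : P.PosDef) (hQ : Q.PosDef)
    (Γ : Matrix (Fin N) (Fin N) ℝ) (hΓsymm : Γ.IsSymm) (hΓpos : Γ.PosDef)
    (A : ℝ → Matrix (Fin N) (Fin N) ℝ)
    (hLyap : ∀ t, (-Q - (P * A t + (A t)ᵀ * P)).PosSemidef)
    (B : Matrix (Fin N) (Fin m) ℝ)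
    (e x : ℝ → Fin N → ℝ)
    (Khat Ks Ks' Pr : ℝ → Matrix (Fin N) (Fin m) ℝ)
    -- error dynamics ė = A_m e + B K̃ᵀ x
    (he : ∀ t, HasDerivAt e
      ((A t).mulVec (e t) + B.mulVec ((Khat t - Ks t)ᵀ.mulVec (x t))) t)
    -- adaptive law: K̇̂ = Proj_Γ(K̂, Y) with Y = -x eᵀ P B
    (hKhat : ∀ t, HasDerivAt Khat (Pr t) t)
    (hKs : ∀ t, HasDerivAt Ks (Ks' t) t)
    (hProj : ∀ t,
      Matrix.trace ((Khat t - Ks t)ᵀ *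
        (Γ⁻¹ * Pr t - (-vecMulVec (x t) (vecMul (vecMul (e t) P) B)))) ≤ 0) :
    ∀ t, ∃ d,
      HasDerivAt (fun s => e s ⬝ᵥ P.mulVec (e s) +
        Matrix.trace ((Khat s - Ks s)ᵀ * (Γ⁻¹ * (Khat s - Ks s)))) d t ∧
      d ≤ -(e t ⬝ᵥ Q.mulVec (e t)) -
        2 * Matrix.trace ((Khat t - Ks t)ᵀ * (Γ⁻¹ * Ks' t)) :=
  adaptive_lyapunov_derivative_bound_general P Q hP Γ hΓsymm A hLyap B e x Khat Ks Ks' Pr he hKhat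
    hKs hProj
end

section
/- In the saturated sub-case II.b: if 2xᵀPB v̄ ≥ -v_min Z_B‖x‖, where v̄ = (v/‖v‖)‖v_d‖ + ṽ with ‖v_d‖ ≥ max(‖ṽ‖, v_min) and ‖v_d‖ > 0, then 2xᵀPB v + 3 Z_B ‖x‖ ‖v‖ ≥ 0, given that ‖xᵀPB‖ ≤ Z_B‖x‖. -/
open Matrix

/-- Euclidean norm of a plain vector. -/
noncomputable def enorm {k : ℕ} (w : Fin k → ℝ) : ℝ := Real.sqrt (w ⬝ᵥ w)

/-! Since `v_d` points along `v`, the hypothesis reads `2 (‖v_d‖/‖v‖) ⟪w, v⟫ + 2 ⟪w, ṽ⟫ ≥ -v_min Z`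
with `w = xᵀPB` and `Z = Z_B ‖x‖ ≥ ‖w‖`. Cauchy–Schwarz bounds `⟪w, ṽ⟫` by `Z ‖v_d‖`, and `v_min ≤ ‖v_d‖`,
so `(‖v_d‖/‖v‖) (2 ⟪w, v⟫ + 3 Z ‖v‖) ≥ 0`. -/

section InnerProductSpace

variable {E : Type*} [NormedAddCommGroup E] [InnerProductSpace ℝ E]

open scoped RealInnerProductSpace

lemma norm_pos_of_eq_norm_div_norm_smul {u v : E} (hdir : u = (‖u‖ / ‖v‖) • v) (hu : 0 < ‖u‖) :
    0 < ‖v‖ := by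
  refine (norm_nonneg v).lt_of_ne' fun hv => ?_
  rw [hdir, hv, div_zero, zero_smul, norm_zero] at hu
  exact lt_irrefl 0 hu

theorem two_inner_add_three_mul_norm_nonneg_of_saturated {w v vd vtil : E} {c vmin : ℝ}
    (hw : ‖w‖ ≤ c) (hdir : vd = (‖vd‖ / ‖v‖) • v) (hvd : 0 < ‖vd‖) (hvmin : vmin ≤ ‖vd‖)
    (hvtil : ‖vtil‖ ≤ ‖vd‖) (hcase : 2 * ⟪w, vd + vtil⟫ ≥ -(vmin * c)) :
    2 * ⟪w, v⟫ + 3 * c * ‖v‖ ≥ 0 := by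
  have hv : 0 < ‖v‖ := norm_pos_of_eq_norm_div_norm_smul hdir hvd
  have hc : 0 ≤ c := (norm_nonneg w).trans hw
  have hinner_vd : ⟪w, vd⟫ = ‖vd‖ / ‖v‖ * ⟪w, v⟫ := by
    rw [← real_inner_smul_right, ← hdir]
  have hinner_vtil : ⟪w, vtil⟫ ≤ c * ‖vd‖ :=
    (real_inner_le_norm w vtil).trans (mul_le_mul hw hvtil (norm_nonneg _) hc)
  have hvmin_c : vmin * c ≤ ‖vd‖ * c := mul_le_mul_of_nonneg_right hvmin hc
  refine nonneg_of_mul_nonneg_right (a := ‖vd‖ / ‖v‖) ?_ (div_pos hvd hv)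
  calc 0 ≤ 2 * ⟪w, vd⟫ + 3 * c * ‖vd‖ := by
        rw [inner_add_right] at hcase
        linarith
    _ = ‖vd‖ / ‖v‖ * (2 * ⟪w, v⟫ + 3 * c * ‖v‖) := by
        rw [hinner_vd]
        field_simp

end InnerProductSpace

lemma enorm_eq_norm_toLp {k : ℕ} (w : Fin k → ℝ) :
    _root_.enorm w = ‖WithLp.toLp 2 w‖ := by
  rw [norm_eq_sqrt_real_inner, EuclideanSpace.inner_toLp_toLp, star_trivial, _root_.enorm]

lemma dotProduct_eq_inner_toLp {k : ℕ} (a b : Fin k → ℝ) :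
    a ⬝ᵥ b = inner ℝ (WithLp.toLp 2 a) (WithLp.toLp 2 b) := by
  rw [EuclideanSpace.inner_toLp_toLp, star_trivial, dotProduct_comm]

theorem subcase_IIb_inequality_general {N m : ℕ}
    (P : Matrix (Fin N) (Fin N) ℝ) (B : Matrix (Fin N) (Fin m) ℝ)
    (x : Fin N → ℝ) (v vd vtil : Fin m → ℝ)
    (ZB vmin : ℝ)
    -- Z_B bound on the row vector xᵀPB
    (hZBbound : _root_.enorm (vecMul (vecMul x P) B) ≤ ZB * _root_.enorm x)
    -- direction-preserving decomposition v̄ = (v/‖v‖)‖v_d‖ + ṽ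
    (hvd_dir : vd = (_root_.enorm vd / _root_.enorm v) • v)
    (hvd_pos : 0 < _root_.enorm vd)
    (hvd_ge_vmin : vmin ≤ _root_.enorm vd)
    (hvd_ge_vtil : _root_.enorm vtil ≤ _root_.enorm vd)
    -- sub-case II.b condition: 2xᵀPB v̄ ≥ -v_min Z_B ‖x‖
    (hcase : 2 * (vecMul (vecMul x P) B ⬝ᵥ (vd + vtil)) ≥
      -(vmin * ZB * _root_.enorm x)) :
    2 * (vecMul (vecMul x P) B ⬝ᵥ v) + 3 * ZB * _root_.enorm x * _root_.enorm v ≥ 0 := by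
  simp only [enorm_eq_norm_toLp, dotProduct_eq_inner_toLp, WithLp.toLp_add] at *
  rw [mul_assoc vmin] at hcase
  rw [mul_assoc 3]
  refine two_inner_add_three_mul_norm_nonneg_of_saturated hZBbound ?_ hvd_pos hvd_ge_vmin
    hvd_ge_vtil hcase
  rw [← WithLp.toLp_smul, ← hvd_dir]

theorem subcase_IIb_inequality {N m : ℕ}
    (P : Matrix (Fin N) (Fin N) ℝ) (B : Matrix (Fin N) (Fin m) ℝ)
    (x : Fin N → ℝ) (v vd vtil : Fin m → ℝ)
    (ZB vmin : ℝ) (hZB : 0 < ZB) (hvmin : 0 < vmin)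
    (hv : v ≠ 0)
    -- Z_B bound on the row vector xᵀPB
    (hZBbound : _root_.enorm (vecMul (vecMul x P) B) ≤ ZB * _root_.enorm x)
    -- direction-preserving decomposition v̄ = (v/‖v‖)‖v_d‖ + ṽ
    (hvd_dir : vd = (_root_.enorm vd / _root_.enorm v) • v)
    (hvd_pos : 0 < _root_.enorm vd)
    (hvd_ge_vmin : vmin ≤ _root_.enorm vd)
    (hvd_ge_vtil : _root_.enorm vtil ≤ _root_.enorm vd)
    -- sub-case II.b condition: 2xᵀPB v̄ ≥ -v_min Z_B ‖x‖
    (hcase : 2 * (vecMul (vecMul x P) B ⬝ᵥ (vd + vtil)) ≥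
      -(vmin * ZB * _root_.enorm x)) :
    2 * (vecMul (vecMul x P) B ⬝ᵥ v) + 3 * ZB * _root_.enorm x * _root_.enorm v ≥ 0 :=
  subcase_IIb_inequality_general P B x v vd vtil ZB vmin hZBbound hvd_dir hvd_pos hvd_ge_vmin
    hvd_ge_vtil hcase
end
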